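/- arXiv:2412.15543 — 4 statements merged into one kernel-verified Lean document; each statement's English description precedes it below -/
import Mathlib

section
/- Let A be a finite group with normal subgroup G, let U ≤ G with P_A(U) = P_A(G), and let X ≤ G be a subgroup of G that is normal in A. Then P_A(X) = P_A(U ∩ X). -/
/-- The `A`-prime-power-covering set of a subgroup `H` of `A`. -/
def ppcSet {A : Type*} [Group A] (H : Subgroup A) : Set A :=
  {y | ∃ x ∈ H, (∃ p k : ℕ, p.Prime ∧ orderOf x = p ^ k) ∧ ∃ a : A, a⁻¹ * x * a = y}

theorem stmt5 {A : Type*} [Group A] [Finite A] (G U X : Subgroup A)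
    (hG : G.Normal) (hUG : U ≤ G) (hXG : X ≤ G) (hX : X.Normal)
    (h : ppcSet U = ppcSet G) :
    ppcSet X = ppcSet (U ⊓ X) := by
  ext y
  constructor
  · rintro ⟨x, hx, hord, a, rfl⟩
    have hxG : x ∈ ppcSet G := ⟨x, hXG hx, hord, 1, by group⟩
    rw [← h] at hxG
    obtain ⟨u, hu, huord, b, hbx⟩ := hxG
    have huX : u ∈ X := by
      have : b⁻¹ * u * b ∈ X := hbx ▸ hx
      have := hX.conj_mem _ this b
      simpa [mul_assoc] using this
    exact ⟨u, ⟨hu, huX⟩, huord, b * a, by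
      subst hbx; group⟩
  · rintro ⟨x, hx, hord, a, rfl⟩
    exact ⟨x, hx.2, hord, a, rfl⟩
end

section
/- Let A be a finite group with normal subgroup G and subgroup U ≤ G, and let N = Core_A(U) be the A-core of U. Writing Ĥ = HN/N for subgroups H ≤ A, we have: Ĝ is normal in Â with |Â : Ĝ| = |A : G|, |Ĝ : Û| = |G : U|, and P_A(G) = P_A(U) if and only if P_Â(Ĝ) = P_Â(Û). -/
def HasPrimePowerOrder {M : Type*} [Monoid M] (x : M) : Prop :=
  ∃ p k : ℕ, p.Prime ∧ orderOf x = p ^ k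

section HasPrimePowerOrder

variable {M N : Type*} [Monoid M] [Monoid N]

theorem HasPrimePowerOrder.of_orderOf_dvd {x : M} {y : N} (hy : HasPrimePowerOrder y)
    (h : orderOf x ∣ orderOf y) : HasPrimePowerOrder x := by
  obtain ⟨p, k, hp, hk⟩ := hy
  obtain ⟨i, -, hi⟩ := (Nat.dvd_prime_pow hp).mp (hk ▸ h)
  exact ⟨p, i, hp, hi⟩

theorem HasPrimePowerOrder.map {x : M} (hx : HasPrimePowerOrder x) (f : M →* N) :
    HasPrimePowerOrder (f x) :=
  hx.of_orderOf_dvd (orderOf_map_dvd f x)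

theorem hasPrimePowerOrder_conj_iff {G : Type*} [Group G] (a y : G) :
    HasPrimePowerOrder (a * y * a⁻¹) ↔ HasPrimePowerOrder y := by
  rw [HasPrimePowerOrder, HasPrimePowerOrder, ← MulAut.conj_apply, MulEquiv.orderOf_eq]

end HasPrimePowerOrder

theorem exists_mem_zpowers_hasPrimePowerOrder_map_eq {A B : Type*} [Group A] [Finite A] [Group B]
    (f : A →* B) (x : A) {p k : ℕ} (hp : p.Prime) (hfx : orderOf (f x) = p ^ k) :
    ∃ y ∈ Subgroup.zpowers x, HasPrimePowerOrder y ∧ f y = f x := by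
  have hx : orderOf x ≠ 0 := (orderOf_pos x).ne'
  set m := ordCompl[p] (orderOf x)
  have hxm : orderOf (x ^ m) = p ^ (orderOf x).factorization p := by
    rw [orderOf_pow_of_dvd (Nat.ordCompl_pos p hx).ne' (Nat.ordCompl_dvd _ p)]
    exact Nat.div_eq_of_eq_mul_left (Nat.ordCompl_pos p hx)
      (Nat.ordProj_mul_ordCompl_eq_self _ p).symm
  have hcop : m.Coprime (orderOf (f x)) := hfx ▸ ((Nat.coprime_ordCompl hp hx).pow_left k).symm
  obtain ⟨e, he⟩ := exists_pow_eq_self_of_coprime hcop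
  refine ⟨(x ^ m) ^ e, pow_mem (pow_mem (Subgroup.mem_zpowers x) m) e, ?_, by simpa using he⟩
  exact HasPrimePowerOrder.of_orderOf_dvd ⟨p, _, hp, hxm⟩ (orderOf_pow_dvd e)

section ppcSet

variable {A B : Type*} [Group A] [Group B]

theorem mem_ppcSet_iff {H : Subgroup A} {y : A} :
    y ∈ ppcSet H ↔ HasPrimePowerOrder y ∧ ∃ a : A, a * y * a⁻¹ ∈ H := by
  constructor
  · rintro ⟨x, hx, hxo, a, rfl⟩
    have hconj : a * (a⁻¹ * x * a) * a⁻¹ = x := by group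
    exact ⟨(hasPrimePowerOrder_conj_iff a _).mp (by rwa [hconj]), a, by rwa [hconj]⟩
  · rintro ⟨hy, a, ha⟩
    exact ⟨_, ha, (hasPrimePowerOrder_conj_iff a y).mpr hy, a, by group⟩

theorem ppcSet_mono {H K : Subgroup A} (h : H ≤ K) : ppcSet H ⊆ ppcSet K := by
  rintro y ⟨x, hx, hxo, a, rfl⟩
  exact ⟨x, h hx, hxo, a, rfl⟩

theorem ppcSet_map_eq_of_ppcSet_eq [Finite A] (f : A →* B) {G U : Subgroup A} (hUG : U ≤ G)
    (h : ppcSet G = ppcSet U) : ppcSet (G.map f) = ppcSet (U.map f) := by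
  refine (ppcSet_mono (Subgroup.map_mono hUG)).antisymm' fun z hz ↦ ?_
  obtain ⟨⟨p, k, hp, hz⟩, c, x, hx, hcz⟩ := mem_ppcSet_iff.mp hz
  have hfx : orderOf (f x) = p ^ k := by rw [hcz, ← MulAut.conj_apply, MulEquiv.orderOf_eq, hz]
  obtain ⟨y, hyx, hy, hfy⟩ := exists_mem_zpowers_hasPrimePowerOrder_map_eq f x hp hfx
  have hyG : y ∈ ppcSet G :=
    mem_ppcSet_iff.mpr ⟨hy, 1, by simpa using Subgroup.zpowers_le.mpr hx hyx⟩
  obtain ⟨-, d, hd⟩ := mem_ppcSet_iff.mp (h ▸ hyG)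
  refine mem_ppcSet_iff.mpr ⟨⟨p, k, hp, hz⟩, f d * c, ?_⟩
  have hconj : f d * c * z * (f d * c)⁻¹ = f (d * y * d⁻¹) := by
    simp only [map_mul, map_inv, hfy, hcz]
    group
  exact hconj ▸ Subgroup.mem_map_of_mem f hd

theorem ppcSet_eq_of_ppcSet_map_eq (f : A →* B) (hf : Function.Surjective f)
    {G U : Subgroup A} (hUG : U ≤ G) (hker : f.ker ≤ U)
    (h : ppcSet (G.map f) = ppcSet (U.map f)) : ppcSet G = ppcSet U := by
  refine (ppcSet_mono hUG).antisymm' fun y hy ↦ ?_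
  obtain ⟨hyo, b, hb⟩ := mem_ppcSet_iff.mp hy
  have hfy : f y ∈ ppcSet (G.map f) :=
    mem_ppcSet_iff.mpr ⟨hyo.map f, f b, by simpa using Subgroup.mem_map_of_mem f hb⟩
  obtain ⟨-, c, hc⟩ := mem_ppcSet_iff.mp (h ▸ hfy)
  obtain ⟨d, rfl⟩ := hf c
  have hd : d * y * d⁻¹ ∈ U := by
    rw [← Subgroup.comap_map_eq_self hker, Subgroup.mem_comap]
    simpa using hc
  exact mem_ppcSet_iff.mpr ⟨hyo, d, hd⟩

end ppcSet

theorem stmt6 {A : Type*} [Group A] [Finite A] (G U : Subgroup A)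
    (hG : G.Normal) (hUG : U ≤ G) :
    (Subgroup.map (QuotientGroup.mk' U.normalCore) G).Normal ∧
    (Subgroup.map (QuotientGroup.mk' U.normalCore) G).index = G.index ∧
    (Subgroup.map (QuotientGroup.mk' U.normalCore) U).relIndex
      (Subgroup.map (QuotientGroup.mk' U.normalCore) G) = U.relIndex G ∧
    (ppcSet G = ppcSet U ↔
      ppcSet (Subgroup.map (QuotientGroup.mk' U.normalCore) G)
        = ppcSet (Subgroup.map (QuotientGroup.mk' U.normalCore) U)) := by
  set π := QuotientGroup.mk' U.normalCore
  have hπ : Function.Surjective π := QuotientGroup.mk'_surjective _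
  have hkerU : π.ker ≤ U := (QuotientGroup.ker_mk' _).trans_le U.normalCore_le
  have hkerG : π.ker ≤ G := hkerU.trans hUG
  refine ⟨hG.map π hπ, G.index_map_eq hπ hkerG, ?_,
    ppcSet_map_eq_of_ppcSet_eq π hUG, ppcSet_eq_of_ppcSet_map_eq π hπ hUG hkerU⟩
  rw [Subgroup.relIndex_map_map, sup_eq_left.mpr hkerU, sup_eq_left.mpr hkerG]
end

section
/- Let T be a finite nonabelian simple group, and let m_0(T) be the maximum over all primes p of the number of conjugacy classes of p-elements in T. Let k ≥ m_0(T)+1, G = T^k, A = T ≀ Sym(k) = G ⋊ Sym(k), and U = { (t_1,…,t_{k-2}, t, t) : t_i, t ∈ T }. Then P_A(U) = P_A(G); that is, every element of prime power order in T^k is A-conjugate to an element whose last two coordinates are equal. -/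
/-- The subgroup of `T^k` consisting of tuples whose last two coordinates
(those with index `≥ k - 2`) are equal. -/
def lastTwoEqual (T : Type*) [Group T] (k : ℕ) : Subgroup (Fin k → T) where
  carrier := {f | ∀ i j : Fin k, k - 2 ≤ (i : ℕ) → k - 2 ≤ (j : ℕ) → f i = f j}
  one_mem' := by intro i j _ _; rfl
  mul_mem' := by
    intro f g hf hg i j hi hj
    simp only [Pi.mul_apply, hf i j hi hj, hg i j hi hj]
  inv_mem' := by
    intro f hf i j hi hj
    simp only [Pi.inv_apply, hf i j hi hj]

theorem stmt8 (T : Type*) [Group T] [Finite T] [IsSimpleGroup T]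
    (hnab : ∃ a b : T, a * b ≠ b * a) (k : ℕ)
    (hk : ∀ p : ℕ, p.Prime →
      Nat.card {c : ConjClasses T | ∃ x : T, ConjClasses.mk x = c ∧ ∃ j : ℕ, orderOf x = p ^ j}
        + 1 ≤ k)
    (φ : Equiv.Perm (Fin k) →* MulAut (Fin k → T))
    (hφ : ∀ (σ : Equiv.Perm (Fin k)) (f : Fin k → T) (i : Fin k), φ σ f i = f (σ⁻¹ i)) :
    ppcSet (Subgroup.map (SemidirectProduct.inl (φ := φ)) (lastTwoEqual T k))
      = ppcSet (SemidirectProduct.inl (φ := φ)).range := by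
  ext y
  simp only [ppcSet, Set.mem_setOf_eq]
  constructor
  · rintro ⟨x, hx, hord, a, ha⟩
    obtain ⟨g, _, rfl⟩ := hx
    exact ⟨SemidirectProduct.inl g, ⟨g, rfl⟩, hord, a, ha⟩
  · rintro ⟨x, hx, ⟨p, m, hp, hord⟩, a, ha⟩
    obtain ⟨f, rfl⟩ := hx
    -- each coordinate has p-power order
    have hordf : orderOf f = p ^ m := by
      rw [← orderOf_injective (SemidirectProduct.inl (φ := φ))
        SemidirectProduct.inl_injective f]
      exact hord
    have hcoord : ∀ i : Fin k, ∃ n : ℕ, orderOf (f i) = p ^ n := by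
      intro i
      have hdvd : orderOf (f i) ∣ p ^ m := by
        rw [← hordf]
        exact orderOf_map_dvd (Pi.evalMonoidHom (fun _ : Fin k => T) i) f
      obtain ⟨n, _, hn⟩ := (Nat.dvd_prime_pow hp).mp hdvd
      exact ⟨n, hn⟩
    set S := {c : ConjClasses T | ∃ x : T, ConjClasses.mk x = c ∧ ∃ j : ℕ, orderOf x = p ^ j}
      with hS
    have hSne : Nonempty ↥S := ⟨⟨ConjClasses.mk 1, 1, rfl, 0, by simp⟩⟩
    have hSpos : 0 < Nat.card ↥S := Nat.card_pos
    have hkcard : Nat.card ↥S + 1 ≤ k := hk p hp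
    have hk2 : 2 ≤ k := by omega
    -- pigeonhole
    have : Fintype ↥S := Fintype.ofFinite _
    have hlt : Fintype.card ↥S < Fintype.card (Fin k) := by
      rw [Fintype.card_fin, ← Nat.card_eq_fintype_card]
      omega
    obtain ⟨i, j, hij, hconj⟩ := Fintype.exists_ne_map_eq_of_card_lt
      (fun i : Fin k => (⟨ConjClasses.mk (f i), f i, rfl, hcoord i⟩ : ↥S)) hlt
    have hconj' : IsConj (f i) (f j) :=
      ConjClasses.mk_eq_mk_iff_isConj.mp (congrArg Subtype.val hconj)
    obtain ⟨c, hc⟩ := isConj_iff.mp hconj'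
    -- c * f i * c⁻¹ = f j
    set a0 : Fin k := ⟨k - 2, by omega⟩
    set a1 : Fin k := ⟨k - 1, by omega⟩
    have hva0 : (a0 : ℕ) = k - 2 := rfl
    have hva1 : (a1 : ℕ) = k - 1 := rfl
    have ha01 : a0 ≠ a1 := by
      intro hcc
      have := congrArg Fin.val hcc
      rw [hva0, hva1] at this
      omega
    set τ : Equiv.Perm (Fin k) := Equiv.swap a0 i with hτ
    have hτ0 : τ a0 = i := Equiv.swap_apply_left _ _
    have hj' : τ.symm j ≠ a0 := by
      intro h
      apply hij
      rw [← hτ0, ← h, Equiv.apply_symm_apply]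
    set σ : Equiv.Perm (Fin k) := τ * Equiv.swap a1 (τ.symm j) with hσ
    have hσ0 : σ a0 = i := by
      simp only [hσ, Equiv.Perm.mul_apply]
      rw [Equiv.swap_apply_of_ne_of_ne ha01 (Ne.symm hj')]
      exact hτ0
    have hσ1 : σ a1 = j := by
      simp only [hσ, Equiv.Perm.mul_apply]
      rw [Equiv.swap_apply_left, Equiv.apply_symm_apply]
    set h : Fin k → T := fun i' => if i' = a0 then c⁻¹ else 1 with hh
    set r : Fin k → T := h⁻¹ * (φ σ⁻¹ f) * h with hr
    have hφval : ∀ i' : Fin k, (φ σ⁻¹) f i' = f (σ i') := by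
      intro i'
      rw [hφ, inv_inv]
    have hha0 : h a0 = c⁻¹ := if_pos rfl
    have hha1 : h a1 = 1 := if_neg (fun hcc => ha01 hcc.symm)
    have hra0 : r a0 = f j := by
      simp only [hr, Pi.mul_apply, Pi.inv_apply, hφval, hσ0, hha0, inv_inv]
      exact hc
    have hra1 : r a1 = f j := by
      simp only [hr, Pi.mul_apply, Pi.inv_apply, hφval, hσ1, hha1, inv_one,
        one_mul, mul_one]
    have hrmem : r ∈ lastTwoEqual T k := by
      intro i1 j1 hi1 hj1
      have key : ∀ i2 : Fin k, k - 2 ≤ (i2 : ℕ) → r i2 = f j := by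
        intro i2 hi2
        have hlt2 := i2.isLt
        have : i2 = a0 ∨ i2 = a1 := by
          rcases Nat.lt_or_ge (i2 : ℕ) (k - 1) with h' | h'
          · left; refine Fin.ext ?_; rw [hva0]; omega
          · right; refine Fin.ext ?_; rw [hva1]; omega
        rcases this with rfl | rfl
        · exact hra0
        · exact hra1
      rw [key i1 hi1, key j1 hj1]
    -- conjugation identity
    set b : SemidirectProduct (Fin k → T) (Equiv.Perm (Fin k)) φ :=
      SemidirectProduct.inr σ * SemidirectProduct.inl h with hb
    have hconjeq : SemidirectProduct.inl (φ := φ) r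
        = b⁻¹ * SemidirectProduct.inl f * b := by
      have h1 : SemidirectProduct.inl (φ := φ) ((φ σ⁻¹) f)
          = (SemidirectProduct.inr σ)⁻¹ * SemidirectProduct.inl f
            * SemidirectProduct.inr σ := by
        rw [SemidirectProduct.inl_aut σ⁻¹ f, map_inv, inv_inv]
      calc SemidirectProduct.inl (φ := φ) r
          = (SemidirectProduct.inl h)⁻¹
            * SemidirectProduct.inl (φ := φ) ((φ σ⁻¹) f)
            * SemidirectProduct.inl h := by
            rw [hr, map_mul, map_mul, map_inv]
        _ = b⁻¹ * SemidirectProduct.inl f * b := by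
            rw [h1, hb]
            group
    refine ⟨SemidirectProduct.inl r, ⟨r, hrmem, rfl⟩, ⟨p, m, hp, ?_⟩, b⁻¹ * a, ?_⟩
    · rw [hconjeq, ← hord]
      have : b⁻¹ * SemidirectProduct.inl (φ := φ) f * b
          = (MulAut.conj b⁻¹) (SemidirectProduct.inl f) := by
        simp [MulAut.conj_apply]
      rw [this]
      exact orderOf_injective (MulAut.conj b⁻¹).toMonoidHom
        (MulAut.conj b⁻¹).injective _
    · rw [hconjeq, ← ha]
      group
end

section
/- Let A be a finite group acting faithfully and transitively on a finite set Ω, with a normal subgroup G of index n containing a point stabiliser U = A_α. Let Ω_1, …, Ω_n be the G-orbits on Ω with α ∈ Ω_1, and suppose G acts on Ω_1 as a primitive permutation group of affine type (i.e. Soc(G^{Ω_1}) is elementary abelian, regular on Ω_1). If P_A(G) = P_A(U), then |G : U| ≤ n. -/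
open MulAction Subgroup Pointwise

theorem IsPGroup.normalClosure_of_le_normal {A : Type*} [Group A] {p : ℕ} {G S : Subgroup A}
    [G.Normal] (hSG : S ≤ G) (hSnormal : ∀ g ∈ G, ∀ s ∈ S, g * s * g⁻¹ ∈ S)
    (hS : IsPGroup p S) : IsPGroup p (normalClosure (S : Set A)) := by
  obtain ⟨P⟩ : Nonempty (Sylow p G) := inferInstance
  have : (S.subgroupOf G).Normal :=
    ⟨fun s hs g => by simpa [mem_subgroupOf] using hSnormal g g.2 s hs⟩
  have hconj_le (c : A) : (S.subgroupOf G).map (MulAut.conjNormal c).toMonoidHom ≤ P :=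
    have := this.map (MulAut.conjNormal c).toMonoidHom (MulAut.conjNormal c).surjective
    ((hS.of_equiv (subgroupOfEquivOfLe hSG).symm).map _).le_sylow_of_normal P
  refine (P.isPGroup'.map G.subtype).to_le (closure_le _ |>.mpr ?_)
  intro x hx
  obtain ⟨s, hs, hsx⟩ := Group.mem_conjugatesOfSet_iff.mp hx
  obtain ⟨c, rfl⟩ := isConj_iff.mp hsx
  exact ⟨_, hconj_le c ⟨⟨s, hSG hs⟩, hs, rfl⟩, by simp [MulAut.conjNormal_apply]⟩

theorem IsPGroup.eq_bot_of_centralizer_inf_eq_bot {A : Type*} [Group A] {p : ℕ} [Fact p.Prime]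
    {N : Subgroup A} [Finite N] (hN : IsPGroup p N) (h : centralizer N ⊓ N = ⊥) : N = ⊥ := by
  by_contra hne
  have : Nontrivial N := (nontrivial_iff_ne_bot N).mpr hne
  have := hN.center_nontrivial
  obtain ⟨c, hc⟩ := exists_ne (1 : center N)
  have hcZ : ((c : N) : A) ∈ centralizer N ⊓ N :=
    ⟨mem_centralizer_iff.mpr fun x hx => congrArg Subtype.val (mem_center_iff.mp c.2 ⟨x, hx⟩),
      (c : N).2⟩
  rw [h, mem_bot] at hcZ
  exact hc (Subtype.ext (Subtype.ext hcZ))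

theorem exists_smul_eq_self_of_ppcSet_eq {A X : Type*} [Group A] [MulAction A X]
    {G : Subgroup A} {α : X} (hppc : ppcSet G = ppcSet (stabilizer A α)) {x : A} (hx : x ∈ G)
    {p k : ℕ} (hp : p.Prime) (hord : orderOf x = p ^ k) : ∃ β : X, x • β = β := by
  have hmem : x ∈ ppcSet G := ⟨x, hx, ⟨p, k, hp, hord⟩, 1, by group⟩
  obtain ⟨u, hu, -, a, rfl⟩ := hppc ▸ hmem
  refine ⟨a⁻¹ • α, ?_⟩
  rw [smul_smul, show a⁻¹ * u * a * a⁻¹ = a⁻¹ * u by group, mul_smul, mem_stabilizer_iff.mp hu]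

namespace MulAction

theorem smul_eq_self_of_mem_orbit_of_commute {M X : Type*} [Monoid M] [MulAction M X] {z : M}
    (hz : ∀ m : M, Commute z m) {β γ : X} (hβ : z • β = β) (hγ : γ ∈ orbit M β) : z • γ = γ := by
  obtain ⟨m, rfl⟩ := hγ
  rw [smul_smul, (hz m).eq, mul_smul, hβ]

theorem orbit_eq_orbit_of_normal {A X : Type*} [Group A] [MulAction A X] [IsPretransitive A X]
    {Z G : Subgroup A} [Z.Normal] [G.Normal] {α : X} (h : orbit Z α = orbit G α) (β : X) :
    orbit Z β = orbit G β := by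
  obtain ⟨a, rfl⟩ := exists_smul_eq A α β
  rw [← smul_orbit_eq_orbit_smul, ← smul_orbit_eq_orbit_smul, h]

theorem eq_bot_of_orbit_subsingleton {A X : Type*} [Group A] [MulAction A X]
    [IsPretransitive A X] [FaithfulSMul A X] {Z : Subgroup A} [Z.Normal] {α : X}
    (h : (orbit Z α).Subsingleton) : Z = ⊥ := by
  refine (eq_bot_iff_forall Z).mpr fun z hz => eq_of_smul_eq_smul (α := X) fun β => ?_
  obtain ⟨a, rfl⟩ := exists_smul_eq A α β
  have hsub : (orbit Z (a • α)).Subsingleton := by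
    rw [← smul_orbit_eq_orbit_smul, ← Set.image_smul]
    exact h.image _
  rw [one_smul]
  exact hsub (mem_orbit _ (⟨z, hz⟩ : Z)) (mem_orbit_self _)

theorem exists_card_orbit_le_of_forall_exists_smul_eq_self {M X ι : Type*} [Group M]
    [MulAction M X] [Finite ι] (r : ι → X) (h : ∀ z : M, ∃ i, z • r i = r i) :
    ∃ i, Nat.card (orbit M (r i)) ≤ Nat.card ι := by
  have := Fintype.ofFinite ι
  have hcover : ⋃ i ∈ Finset.univ, (1 : M) • (stabilizer M (r i) : Set M) = Set.univ := by
    refine Set.eq_univ_of_forall fun z => ?_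
    obtain ⟨i, hi⟩ := h z
    simpa using ⟨i, hi⟩
  obtain ⟨i, -, -, hi⟩ := exists_index_le_card_of_leftCoset_cover hcover
  refine ⟨i, ?_⟩
  rwa [Nat.card_coe_set_eq, ← index_stabilizer, Nat.card_eq_fintype_card, ← Finset.card_univ]

theorem relIndex_stabilizer {A X : Type*} [Group A] [MulAction A X] (G : Subgroup A) (α : X) :
    (stabilizer A α).relIndex G = Nat.card (orbit G α) := by
  rw [Nat.card_coe_set_eq, ← index_stabilizer, relIndex]
  rfl

theorem card_orbit_le_index_of_forall_exists_smul_eq_self {A X : Type*} [Group A] [MulAction A X]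
    [IsPretransitive A X] {Z G : Subgroup A} [Z.Normal] [G.Normal] [G.FiniteIndex] {α : X}
    (hZcomm : ∀ x ∈ Z, ∀ y ∈ Z, x * y = y * x) (horbit : orbit Z α = orbit G α)
    (hfix : ∀ z ∈ Z, ∃ β : X, z • β = β) :
    Nat.card (orbit G α) ≤ G.index := by
  let r : A ⧸ G → X := fun q => q.out • α
  have hr_mem (β : X) : ∃ q, r q ∈ orbit G β := by
    obtain ⟨a, rfl⟩ := exists_smul_eq A α β
    obtain ⟨g, hg⟩ := QuotientGroup.mk_out_eq_mul G a
    refine ⟨a, orbit_eq_iff.mp ?_⟩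
    rw [show r a = (a * g) • α from congrArg (· • α) hg, mul_smul,
      ← smul_orbit_eq_orbit_smul G _ a, ← smul_orbit_eq_orbit_smul G α a]
    exact congrArg (a • ·) (orbit_smul g α)
  have hr_fix (z : Z) : ∃ q, z • r q = r q := by
    obtain ⟨β, hβ⟩ := hfix z z.2
    obtain ⟨q, hq⟩ := hr_mem β
    refine ⟨q, smul_eq_self_of_mem_orbit_of_commute (fun w => Subtype.ext (hZcomm _ z.2 _ w.2))
      hβ ?_⟩
    rwa [orbit_eq_orbit_of_normal horbit]
  obtain ⟨q, hq⟩ := exists_card_orbit_le_of_forall_exists_smul_eq_self r hr_fix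
  calc Nat.card (orbit G α) = Nat.card (orbit Z (r q)) := by
        rw [← smul_orbit_eq_orbit_smul, horbit, Nat.card_coe_set_eq, Nat.card_coe_set_eq,
          Set.ncard_smul_set]
    _ ≤ G.index := hq

end MulAction

theorem stmt9_general {A Ω : Type*} [Group A] [Finite A] [MulAction A Ω]
    [FaithfulSMul A Ω] [MulAction.IsPretransitive A Ω]
    (G : Subgroup A) (hG : G.Normal) (n : ℕ) (hn : G.index = n)
    (α : Ω)
    -- `G` acts primitively on its orbit `Ω₁` containing `α` :
    (hprim : ∀ B : Set Ω, B ⊆ MulAction.orbit (↥G) α → MulAction.IsBlock (↥G) B →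
      B.Subsingleton ∨ B = MulAction.orbit (↥G) α)
    -- of affine type: the socle of `G^{Ω₁}` is elementary abelian and regular on `Ω₁`,
    -- witnessed by an elementary abelian subgroup `S` normal in `G`, inducing a
    -- transitive and semiregular permutation group on `Ω₁` :
    (p : ℕ) (hp : p.Prime) (S : Subgroup A) (hSG : S ≤ G)
    (hSnormal : ∀ g ∈ G, ∀ s ∈ S, g * s * g⁻¹ ∈ S)
    (hSp : ∀ x ∈ S, x ^ p = 1)
    (hStrans : ∀ β ∈ MulAction.orbit (↥G) α, ∀ γ ∈ MulAction.orbit (↥G) α,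
      ∃ s ∈ S, s • β = γ)
    (hppc : ppcSet G = ppcSet (MulAction.stabilizer A α)) :
    (MulAction.stabilizer A α).relIndex G ≤ n := by
  have := hG
  have : Fact p.Prime := ⟨hp⟩
  let N := normalClosure (S : Set A)
  have hNG : N ≤ G := normalClosure_le_normal hSG
  have hNp : IsPGroup p N := IsPGroup.normalClosure_of_le_normal hSG hSnormal fun s =>
    ⟨1, Subtype.ext (by simpa using hSp s s.2)⟩
  let Z := centralizer N ⊓ N
  have hZG : Z ≤ G := inf_le_right.trans hNG
  have hZcomm : ∀ x ∈ Z, ∀ y ∈ Z, x * y = y * x := fun x hx y hy =>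
    (mem_centralizer_iff.mp hx.1 y hy.2).symm
  have hZfix : ∀ z ∈ Z, ∃ β : Ω, z • β = β := fun z hz => by
    obtain ⟨k, hk⟩ := IsPGroup.iff_orderOf.mp hNp ⟨z, hz.2⟩
    exact exists_smul_eq_self_of_ppcSet_eq hppc (hZG hz) hp (by rwa [orderOf_mk] at hk)
  have hZblock : IsBlock G (orbit Z α) := (IsBlock.orbit_of_normal α).subgroup
  have hZsub : orbit Z α ⊆ orbit G α := by
    rintro _ ⟨z, rfl⟩
    exact ⟨⟨z, hZG z.2⟩, rfl⟩
  rw [relIndex_stabilizer, ← hn]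
  rcases hprim _ hZsub hZblock with hsing | hfull
  · have hSbot : S = ⊥ := le_bot_iff.mp <| (hNp.eq_bot_of_centralizer_inf_eq_bot
      (eq_bot_of_orbit_subsingleton hsing)) ▸ le_normalClosure
    have horbit : orbit G α = {α} := Set.eq_singleton_iff_unique_mem.mpr
      ⟨mem_orbit_self α, fun β hβ => by
        obtain ⟨s, hs, rfl⟩ := hStrans α (mem_orbit_self α) β hβ
        rw [hSbot, mem_bot] at hs
        rw [hs, one_smul]⟩
    rw [horbit, Nat.card_unique]
    exact Nat.one_le_iff_ne_zero.mpr index_ne_zero_of_finite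
  · exact card_orbit_le_index_of_forall_exists_smul_eq_self hZcomm hfull hZfix

theorem stmt9 {A Ω : Type*} [Group A] [Finite A] [Finite Ω] [MulAction A Ω]
    [FaithfulSMul A Ω] [MulAction.IsPretransitive A Ω]
    (G : Subgroup A) (hG : G.Normal) (n : ℕ) (hn : G.index = n)
    (α : Ω) (hstab : MulAction.stabilizer A α ≤ G)
    -- `G` acts primitively on its orbit `Ω₁` containing `α` :
    (hprim : ∀ B : Set Ω, B ⊆ MulAction.orbit (↥G) α → MulAction.IsBlock (↥G) B →
      B.Subsingleton ∨ B = MulAction.orbit (↥G) α)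
    -- of affine type: the socle of `G^{Ω₁}` is elementary abelian and regular on `Ω₁`,
    -- witnessed by an elementary abelian subgroup `S` normal in `G`, inducing a
    -- transitive and semiregular permutation group on `Ω₁` :
    (p : ℕ) (hp : p.Prime) (S : Subgroup A) (hSG : S ≤ G)
    (hSnormal : ∀ g ∈ G, ∀ s ∈ S, g * s * g⁻¹ ∈ S)
    (hSab : ∀ x ∈ S, ∀ y ∈ S, x * y = y * x)
    (hSp : ∀ x ∈ S, x ^ p = 1)
    (hStrans : ∀ β ∈ MulAction.orbit (↥G) α, ∀ γ ∈ MulAction.orbit (↥G) α,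
      ∃ s ∈ S, s • β = γ)
    (hSreg : ∀ s ∈ S, ∀ β ∈ MulAction.orbit (↥G) α, s • β = β →
      ∀ γ ∈ MulAction.orbit (↥G) α, s • γ = γ)
    (hppc : ppcSet G = ppcSet (MulAction.stabilizer A α)) :
    (MulAction.stabilizer A α).relIndex G ≤ n :=
  stmt9_general G hG n hn α hprim p hp S hSG hSnormal hSp hStrans hppc
end
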